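/- arXiv:2207.07760 — 3 statements merged into one kernel-verified Lean document; each statement's English description precedes it below -/
import Mathlib

section
/- Let K and P be Hermitian matrices of the same finite dimension. Then tr(P·exp(K)) / tr(exp(K)) ≤ log( tr(exp(K+P)) / tr(exp(K)) ). -/
/-!
Diagonalize `K = U diag(λ) U*` and put `pᵢ = Re (U* P U)ᵢᵢ`. The left-hand side is the average of
`p` under the Gibbs weights `wᵢ = e^{λᵢ} / Z`, so Jensen's inequality for `exp` bounds it by
`log (∑ e^{λᵢ + pᵢ} / Z)`. The numbers `λᵢ + pᵢ` are the diagonal entries of `K + P` in the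
eigenbasis of `K`, and Peierls' inequality `∑ᵢ exp Aᵢᵢ ≤ tr exp A` (in any orthonormal basis)
bounds `∑ e^{λᵢ + pᵢ}` by `tr exp (K + P)`. Peierls' inequality is again Jensen: in an eigenbasis
of `A`, each diagonal entry of `A` is an average of its eigenvalues with the doubly stochastic
weights `|Xᵢⱼ|²` of a unitary change of basis `X`.
-/

open Matrix Finset

namespace Real

lemma sum_mul_le_log_sum_mul_exp {ι : Type*} {s : Finset ι} {w p : ι → ℝ}
    (hw : ∀ i ∈ s, 0 ≤ w i) (hw₁ : ∑ i ∈ s, w i = 1) :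
    ∑ i ∈ s, w i * p i ≤ log (∑ i ∈ s, w i * exp (p i)) := by
  have hjensen : exp (∑ i ∈ s, w i * p i) ≤ ∑ i ∈ s, w i * exp (p i) := by
    simpa only [smul_eq_mul] using
      convexOn_exp.map_sum_le hw hw₁ (fun i _ => Set.mem_univ (p i))
  exact (le_log_iff_exp_le ((exp_pos _).trans_le hjensen)).2 hjensen

lemma sum_exp_mul_div_le_log_div {ι : Type*} [Fintype ι] (lam p : ι → ℝ) {T : ℝ}
    (hT : ∑ i, exp (lam i + p i) ≤ T) :
    (∑ i, exp (lam i) * p i) / ∑ i, exp (lam i) ≤ log (T / ∑ i, exp (lam i)) := by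
  -- for empty `ι` both sides are `0`, since `0 / 0 = 0` and `log 0 = 0`
  cases isEmpty_or_nonempty ι
  · simp
  set Z := ∑ i, exp (lam i)
  have hZ : 0 < Z := sum_pos (fun i _ => exp_pos _) univ_nonempty
  have hw₁ : ∑ i, exp (lam i) / Z = 1 := by rw [← sum_div, div_self hZ.ne']
  calc (∑ i, exp (lam i) * p i) / Z = ∑ i, exp (lam i) / Z * p i := by
        rw [sum_div]; congr! 1 with i; ring
    _ ≤ log (∑ i, exp (lam i) / Z * exp (p i)) :=
        sum_mul_le_log_sum_mul_exp (fun i _ => by positivity) hw₁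
    _ = log ((∑ i, exp (lam i + p i)) / Z) := by
        rw [sum_div]; congr! 2 with i; rw [exp_add]; ring
    _ ≤ log (T / Z) := log_le_log (by positivity) (by gcongr)

end Real

namespace Matrix

variable {ι : Type*} [Fintype ι] [DecidableEq ι]

lemma sum_row_normSq_eq_one_of_mem_unitaryGroup {X : Matrix ι ι ℂ}
    (hX : X ∈ unitaryGroup ι ℂ) (i : ι) : ∑ j, Complex.normSq (X i j) = 1 := by
  have h := congr_fun₂ (mem_unitaryGroup_iff.mp hX) i i
  simp only [mul_apply, star_apply, Complex.star_def, Complex.mul_conj, one_apply_eq] at h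
  exact_mod_cast h

lemma sum_col_normSq_eq_one_of_mem_unitaryGroup {X : Matrix ι ι ℂ}
    (hX : X ∈ unitaryGroup ι ℂ) (j : ι) : ∑ i, Complex.normSq (X i j) = 1 := by
  have h := congr_fun₂ (mem_unitaryGroup_iff'.mp hX) j j
  simp only [mul_apply, star_apply, Complex.star_def, mul_comm (starRingEnd ℂ _),
    Complex.mul_conj, one_apply_eq] at h
  exact_mod_cast h

lemma re_mul_diagonal_mul_star_apply_self (X : Matrix ι ι ℂ) (μ : ι → ℝ) (i : ι) :
    ((X * diagonal (fun j => (μ j : ℂ)) * star X) i i).re =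
      ∑ j, Complex.normSq (X i j) * μ j := by
  rw [mul_apply, Complex.re_sum]
  refine sum_congr rfl fun j _ => ?_
  rw [mul_diagonal, star_apply, Complex.star_def, mul_right_comm, Complex.mul_conj,
    ← Complex.ofReal_mul, Complex.ofReal_re]

lemma sum_exp_re_mul_diagonal_mul_star_apply_self_le {X : Matrix ι ι ℂ}
    (hX : X ∈ unitaryGroup ι ℂ) (μ : ι → ℝ) :
    ∑ i, Real.exp ((X * diagonal (fun j => (μ j : ℂ)) * star X) i i).re ≤
      ∑ j, Real.exp (μ j) :=
  calc ∑ i, Real.exp ((X * diagonal (fun j => (μ j : ℂ)) * star X) i i).re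
      ≤ ∑ i, ∑ j, Complex.normSq (X i j) * Real.exp (μ j) := by
        gcongr with i
        simpa only [re_mul_diagonal_mul_star_apply_self, smul_eq_mul] using
          convexOn_exp.map_sum_le (fun j _ => Complex.normSq_nonneg _)
            (sum_row_normSq_eq_one_of_mem_unitaryGroup hX i) (fun j _ => Set.mem_univ (μ j))
    _ = ∑ j, Real.exp (μ j) := by
        simp only [sum_comm (γ := ι), ← sum_mul, sum_col_normSq_eq_one_of_mem_unitaryGroup hX,
          one_mul]

namespace IsHermitian

variable {A : Matrix ι ι ℂ}

lemma exp_eq (hA : A.IsHermitian) :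
    NormedSpace.exp A = (hA.eigenvectorUnitary : Matrix ι ι ℂ) *
      diagonal (fun i => (Real.exp (hA.eigenvalues i) : ℂ)) *
      star (hA.eigenvectorUnitary : Matrix ι ι ℂ) := by
  have hinv : (hA.eigenvectorUnitary : Matrix ι ι ℂ)⁻¹ = star ↑hA.eigenvectorUnitary :=
    inv_eq_left_inv (Unitary.coe_star_mul_self _)
  conv_lhs => rw [hA.spectral_theorem, Unitary.conjStarAlgAut_apply, ← hinv]
  rw [exp_conj _ _ Unitary.isUnit_coe, exp_diagonal, hinv]
  simp [Pi.exp_def, Function.comp_def, ← Complex.exp_eq_exp_ℂ, Complex.ofReal_exp]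

lemma trace_mul_exp (hA : A.IsHermitian) (B : Matrix ι ι ℂ) :
    (B * NormedSpace.exp A).trace = ∑ i, Real.exp (hA.eigenvalues i) *
      (star (hA.eigenvectorUnitary : Matrix ι ι ℂ) * B * hA.eigenvectorUnitary) i i := by
  rw [hA.exp_eq, ← mul_assoc, trace_mul_comm, ← mul_assoc, ← mul_assoc, trace]
  simp only [diag_apply, mul_diagonal, mul_comm]

lemma trace_exp (hA : A.IsHermitian) :
    (NormedSpace.exp A).trace = ∑ i, Real.exp (hA.eigenvalues i) := by
  simpa using hA.trace_mul_exp 1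

lemma sum_exp_re_star_mul_mul_apply_self_le_trace_exp (hA : A.IsHermitian)
    {W : Matrix ι ι ℂ} (hW : W ∈ unitaryGroup ι ℂ) :
    ∑ i, Real.exp ((star W * A * W) i i).re ≤ (NormedSpace.exp A).trace.re := by
  have hconj : star W * A * W = star W * hA.eigenvectorUnitary *
      diagonal (fun j => (hA.eigenvalues j : ℂ)) * star (star W * hA.eigenvectorUnitary) := by
    conv_lhs => rw [hA.spectral_theorem]
    simp only [Unitary.conjStarAlgAut_apply, star_mul, star_star, mul_assoc, Function.comp_def,
      RCLike.ofReal_eq_complex_ofReal]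
  rw [hconj, hA.trace_exp, Complex.ofReal_re]
  exact sum_exp_re_mul_diagonal_mul_star_apply_self_le
    (mul_mem (Unitary.star_mem hW) hA.eigenvectorUnitary.2) _

end IsHermitian

end Matrix

/-- Peierls–Bogoliubov inequality: for Hermitian matrices `K`, `P`,
`tr(P e^K)/tr(e^K) ≤ log( tr(e^{K+P})/tr(e^K) )`. -/
theorem stmt1 {n : ℕ} (K P : Matrix (Fin n) (Fin n) ℂ)
    (hK : K.IsHermitian) (hP : P.IsHermitian) :
    (P * NormedSpace.exp K).trace.re / (NormedSpace.exp K).trace.re ≤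
      Real.log ((NormedSpace.exp (K + P)).trace.re / (NormedSpace.exp K).trace.re) := by
  set U : Matrix (Fin n) (Fin n) ℂ := ↑hK.eigenvectorUnitary
  set p : Fin n → ℝ := fun i => ((star U * P * U) i i).re
  have hdiag : ∀ i, ((star U * (K + P) * U) i i).re = hK.eigenvalues i + p i := by
    intro i
    have hK_diagonal := hK.conjStarAlgAut_star_eigenvectorUnitary
    simp only [Unitary.conjStarAlgAut_apply, Unitary.coe_star, star_star] at hK_diagonal
    rw [Matrix.mul_add, Matrix.add_mul, hK_diagonal]
    simp [p]
  have hpeierls := (hK.add hP).sum_exp_re_star_mul_mul_apply_self_le_trace_exp (W := U)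
    hK.eigenvectorUnitary.2
  simp only [hdiag] at hpeierls
  rw [hK.trace_mul_exp, hK.trace_exp, Complex.re_sum, Complex.ofReal_re]
  simp only [Complex.re_ofReal_mul]
  exact Real.sum_exp_mul_div_le_log_div hK.eigenvalues p hpeierls
end

section
/- Let K and P be Hermitian matrices of the same finite dimension. Then tr(P·exp(K)) / tr(exp(K)) ≤ tr(P·exp(K+P)) / tr(exp(K+P)). -/
/-!
Diagonalise `K` and `M = K + P` in orthonormal eigenbases `(uⱼ, κⱼ)` and `(vᵢ, μᵢ)` and put
`cᵢⱼ = |⟪vᵢ, uⱼ⟫|² ≥ 0`. Every trace in the statement is then a sum over pairs `(i, j)`: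
with weights `wᵢⱼ = cᵢⱼ e^{κⱼ}` and `xᵢⱼ = μᵢ - κⱼ`, the left side is the `w`-mean of `x` and the
right side is the mean of `x` for the tilted weights `w e^x`. Tilting by the increasing function
`e^x` can only raise the mean of `x`, which is Chebyshev's sum inequality for `x` and `e^x`.
-/

open Finset

section Chebyshev

variable {ι α : Type*} {s : Finset ι} {w f g : ι → α}

theorem Monovary.sum_mul_sum_le_sum_mul_sum_mul [CommRing α] [LinearOrder α]
    [IsStrictOrderedRing α] (hw : ∀ i ∈ s, 0 ≤ w i) (hfg : Monovary f g) :
    (∑ i ∈ s, w i * f i) * (∑ i ∈ s, w i * g i) ≤ (∑ i ∈ s, w i) * ∑ i ∈ s, w i * f i * g i := by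
  have hpairs : 0 ≤ ∑ i ∈ s, ∑ j ∈ s, w i * w j * ((f j - f i) * (g j - g i)) :=
    sum_nonneg fun i hi => sum_nonneg fun j hj =>
      mul_nonneg (mul_nonneg (hw i hi) (hw j hj)) (monovary_iff_forall_mul_nonneg.1 hfg i j)
  have hsplit : ∑ i ∈ s, ∑ j ∈ s, w i * w j * ((f j - f i) * (g j - g i)) =
      ∑ i ∈ s, ∑ j ∈ s, w i * w j * ((f j - f i) * g j) +
        ∑ i ∈ s, ∑ j ∈ s, w i * w j * ((f i - f j) * g i) := by
    rw [← sum_add_distrib]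
    refine sum_congr rfl fun i _ => ?_
    rw [← sum_add_distrib]
    exact sum_congr rfl fun j _ => by ring
  have hswap : ∑ i ∈ s, ∑ j ∈ s, w i * w j * ((f i - f j) * g i) =
      ∑ i ∈ s, ∑ j ∈ s, w i * w j * ((f j - f i) * g j) := by
    rw [sum_comm]
    simp only [mul_comm (w _) (w _)]
  have hhalf : ∑ i ∈ s, ∑ j ∈ s, w i * w j * ((f j - f i) * g j) =
      (∑ i ∈ s, w i) * ∑ i ∈ s, w i * f i * g i - (∑ i ∈ s, w i * f i) * ∑ i ∈ s, w i * g i := by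
    rw [sum_mul, sum_mul, ← sum_sub_distrib]
    refine sum_congr rfl fun i _ => ?_
    rw [mul_sum, mul_sum, ← sum_sub_distrib]
    exact sum_congr rfl fun j _ => by ring
  linarith

theorem Monovary.sum_mul_div_sum_le_sum_mul_mul_div_sum_mul [Field α] [LinearOrder α]
    [IsStrictOrderedRing α] (hw : ∀ i ∈ s, 0 ≤ w i) (hg : ∀ i ∈ s, 0 < g i)
    (hfg : Monovary f g) :
    (∑ i ∈ s, w i * f i) / ∑ i ∈ s, w i ≤ (∑ i ∈ s, w i * g i * f i) / ∑ i ∈ s, w i * g i := by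
  rcases (sum_nonneg hw).eq_or_lt with hzero | hpos
  · have hw0 : ∀ i ∈ s, w i = 0 := (sum_eq_zero_iff_of_nonneg hw).1 hzero.symm
    have hwg : ∑ i ∈ s, w i * g i = 0 := sum_eq_zero fun i hi => by rw [hw0 i hi, zero_mul]
    rw [← hzero, hwg, div_zero, div_zero]
  · obtain ⟨i, hi, hwi⟩ : ∃ i ∈ s, 0 < w i := by
      by_contra! h
      exact hpos.not_ge (sum_nonpos h)
    have hpos' : 0 < ∑ i ∈ s, w i * g i :=
      sum_pos' (fun j hj => mul_nonneg (hw j hj) (hg j hj).le) ⟨i, hi, mul_pos hwi (hg i hi)⟩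
    rw [div_le_div_iff₀ hpos hpos']
    have hcheb := hfg.sum_mul_sum_le_sum_mul_sum_mul hw
    simp only [mul_right_comm (w _) (g _)]
    linarith [mul_comm (∑ i ∈ s, w i) (∑ i ∈ s, w i * f i * g i)]

end Chebyshev

theorem sum_mul_exp_mul_sub_div_le {ι κ : Type*} [Fintype ι] [Fintype κ] (c : ι → κ → ℝ)
    (hc : ∀ i j, 0 ≤ c i j) (a : ι → ℝ) (b : κ → ℝ) :
    (∑ i, ∑ j, c i j * Real.exp (b j) * (a i - b j)) / ∑ i, ∑ j, c i j * Real.exp (b j) ≤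
      (∑ i, ∑ j, c i j * Real.exp (a i) * (a i - b j)) / ∑ i, ∑ j, c i j * Real.exp (a i) := by
  have htilt : ∀ i j, c i j * Real.exp (b j) * Real.exp (a i - b j) = c i j * Real.exp (a i) :=
    fun i j => by rw [mul_assoc, ← Real.exp_add, add_sub_cancel]
  have key := Monovary.sum_mul_div_sum_le_sum_mul_mul_div_sum_mul (s := univ)
    (w := fun p : ι × κ => c p.1 p.2 * Real.exp (b p.2)) (f := fun p => a p.1 - b p.2)
    (fun p _ => mul_nonneg (hc _ _) (Real.exp_pos _).le) (fun p _ => Real.exp_pos _)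
    ((monovary_self _).comp_monotone_left Real.exp_monotone).symm
  simpa only [Function.comp_apply, htilt, Fintype.sum_prod_type] using key

namespace Matrix

open Unitary

variable {n 𝕜 : Type*} [RCLike 𝕜] [Fintype n] [DecidableEq n]

lemma trace_diagonal_mul_mul_diagonal_mul_star (W : Matrix n n 𝕜) (d e : n → 𝕜) :
    (diagonal d * W * diagonal e * star W).trace =
      ∑ i, ∑ j, d i * e j * (‖W i j‖ ^ 2 : ℝ) := by
  simp only [trace, diag, mul_apply, diagonal_apply, ite_mul, mul_ite, zero_mul, mul_zero,
    sum_ite_eq, sum_ite_eq', mem_univ, if_true, star_apply]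
  refine sum_congr rfl fun i _ => sum_congr rfl fun j _ => ?_
  rw [RCLike.ofReal_pow, ← RCLike.mul_conj, RCLike.star_def]
  ring

lemma trace_conj_diagonal_mul_conj_diagonal (V U : unitary (Matrix n n 𝕜)) (d e : n → 𝕜) :
    (conjStarAlgAut 𝕜 _ V (diagonal d) * conjStarAlgAut 𝕜 _ U (diagonal e)).trace =
      ∑ i, ∑ j, d i * e j * (‖(star (V : Matrix n n 𝕜) * U) i j‖ ^ 2 : ℝ) := by
  rw [← trace_diagonal_mul_mul_diagonal_mul_star, conjStarAlgAut_apply, conjStarAlgAut_apply,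
    star_mul, star_star]
  simp only [mul_assoc]
  rw [trace_mul_comm]
  simp only [mul_assoc]

lemma cfc_mul_cfc (A : Matrix n n 𝕜) (f g : ℝ → ℝ) :
    cfc f A * cfc g A = cfc (fun x => f x * g x) A :=
  (cfc_mul f g A (finite_real_spectrum.continuousOn f) (finite_real_spectrum.continuousOn g)).symm

namespace IsHermitian

variable {A B : Matrix n n 𝕜}

lemma exp_eq_cfc (hA : A.IsHermitian) : NormedSpace.exp A = cfc Real.exp A := by
  have hconj := exp_units_conj (toUnits hA.eigenvectorUnitary)
    (diagonal (RCLike.ofReal ∘ hA.eigenvalues))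
  simp only [Unitary.val_toUnits_apply, val_inv_toUnits_apply, UnitaryGroup.inv_val] at hconj
  rw [hA.cfc_eq, IsHermitian.cfc, conjStarAlgAut_apply]
  conv_lhs => rw [hA.spectral_theorem, conjStarAlgAut_apply]
  rw [hconj, exp_diagonal]
  congr 3
  ext i
  rw [Pi.exp_def]
  simp only [Function.comp_apply, Real.exp_eq_exp_ℝ]
  exact (NormedSpace.algebraMap_exp_comm (hA.eigenvalues i)).symm

/-- `|⟪vᵢ, uⱼ⟫|²` for the orthonormal eigenvectors `vᵢ` of `A` and `uⱼ` of `B`. -/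
noncomputable def eigenOverlap (hA : A.IsHermitian) (hB : B.IsHermitian) (i j : n) : ℝ :=
  ‖(star (hA.eigenvectorUnitary : Matrix n n 𝕜) * hB.eigenvectorUnitary) i j‖ ^ 2

lemma eigenOverlap_nonneg (hA : A.IsHermitian) (hB : B.IsHermitian) (i j : n) :
    0 ≤ eigenOverlap hA hB i j :=
  sq_nonneg _

lemma re_trace_cfc_mul_cfc (hA : A.IsHermitian) (hB : B.IsHermitian) (f g : ℝ → ℝ) :
    RCLike.re (cfc f A * cfc g B).trace =
      ∑ i, ∑ j, eigenOverlap hA hB i j * f (hA.eigenvalues i) * g (hB.eigenvalues j) := by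
  rw [hA.cfc_eq, hB.cfc_eq, IsHermitian.cfc, IsHermitian.cfc,
    trace_conj_diagonal_mul_conj_diagonal]
  simp only [map_sum, Function.comp_apply, ← RCLike.ofReal_mul, RCLike.ofReal_re, eigenOverlap]
  exact sum_congr rfl fun i _ => sum_congr rfl fun j _ => by ring

lemma re_trace_cfc_left (hA : A.IsHermitian) (hB : B.IsHermitian) (f : ℝ → ℝ) :
    RCLike.re (cfc f A).trace = ∑ i, ∑ j, eigenOverlap hA hB i j * f (hA.eigenvalues i) := by
  rw [← mul_one (cfc f A), ← cfc_one ℝ B hB.isSelfAdjoint, re_trace_cfc_mul_cfc hA hB]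
  simp only [Pi.one_apply, mul_one]

lemma re_trace_cfc_right (hA : A.IsHermitian) (hB : B.IsHermitian) (g : ℝ → ℝ) :
    RCLike.re (cfc g B).trace = ∑ i, ∑ j, eigenOverlap hA hB i j * g (hB.eigenvalues j) := by
  rw [← one_mul (cfc g B), ← cfc_one ℝ A hA.isSelfAdjoint, re_trace_cfc_mul_cfc hA hB]
  simp only [Pi.one_apply, mul_one]

lemma re_trace_sub_mul_cfc_left (hA : A.IsHermitian) (hB : B.IsHermitian) (f : ℝ → ℝ) :
    RCLike.re ((A - B) * cfc f A).trace = ∑ i, ∑ j, eigenOverlap hA hB i j *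
      f (hA.eigenvalues i) * (hA.eigenvalues i - hB.eigenvalues j) := by
  have hmulA : cfc f A * A = cfc (fun x => f x * x) A * cfc (1 : ℝ → ℝ) B := by
    rw [cfc_one ℝ B hB.isSelfAdjoint, mul_one, ← cfc_mul_cfc, cfc_id' ℝ A hA.isSelfAdjoint]
  have hmulB : cfc f A * B = cfc f A * cfc (fun x : ℝ => x) B := by
    rw [cfc_id' ℝ B hB.isSelfAdjoint]
  rw [trace_mul_comm, mul_sub, trace_sub, map_sub, hmulA, hmulB, re_trace_cfc_mul_cfc hA hB,
    re_trace_cfc_mul_cfc hA hB, ← sum_sub_distrib]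
  refine sum_congr rfl fun i _ => ?_
  rw [← sum_sub_distrib]
  exact sum_congr rfl fun j _ => by simp only [Pi.one_apply]; ring

lemma re_trace_sub_mul_cfc_right (hA : A.IsHermitian) (hB : B.IsHermitian) (g : ℝ → ℝ) :
    RCLike.re ((A - B) * cfc g B).trace = ∑ i, ∑ j, eigenOverlap hA hB i j *
      g (hB.eigenvalues j) * (hA.eigenvalues i - hB.eigenvalues j) := by
  have hmulA : A * cfc g B = cfc (fun x : ℝ => x) A * cfc g B := by
    rw [cfc_id' ℝ A hA.isSelfAdjoint]
  have hmulB : B * cfc g B = cfc (1 : ℝ → ℝ) A * cfc (fun x => x * g x) B := by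
    rw [cfc_one ℝ A hA.isSelfAdjoint, one_mul, ← cfc_mul_cfc, cfc_id' ℝ B hB.isSelfAdjoint]
  rw [sub_mul, trace_sub, map_sub, hmulA, hmulB, re_trace_cfc_mul_cfc hA hB,
    re_trace_cfc_mul_cfc hA hB, ← sum_sub_distrib]
  refine sum_congr rfl fun i _ => ?_
  rw [← sum_sub_distrib]
  exact sum_congr rfl fun j _ => by simp only [Pi.one_apply]; ring

end IsHermitian

end Matrix

/-- Double Peierls–Bogoliubov estimate: for Hermitian matrices `K`, `P`,
`tr(P e^K)/tr(e^K) ≤ tr(P e^{K+P})/tr(e^{K+P})`. -/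
theorem stmt2 {n : ℕ} (K P : Matrix (Fin n) (Fin n) ℂ)
    (hK : K.IsHermitian) (hP : P.IsHermitian) :
    (P * NormedSpace.exp K).trace.re / (NormedSpace.exp K).trace.re ≤
      (P * NormedSpace.exp (K + P)).trace.re / (NormedSpace.exp (K + P)).trace.re := by
  have hM : (K + P).IsHermitian := hK.add hP
  have key := sum_mul_exp_mul_sub_div_le (hM.eigenOverlap hK) (hM.eigenOverlap_nonneg hK)
    hM.eigenvalues hK.eigenvalues
  rw [← hM.re_trace_sub_mul_cfc_right hK Real.exp, ← hM.re_trace_cfc_right hK Real.exp,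
    ← hM.re_trace_sub_mul_cfc_left hK Real.exp, ← hM.re_trace_cfc_left hK Real.exp,
    ← hK.exp_eq_cfc, ← hM.exp_eq_cfc, add_sub_cancel_left] at key
  exact key
end

section
/- Let K and P be positive semidefinite Hermitian matrices with K positive definite and P positive definite. Then tr(K·log K − K·log P) ≥ tr(K − P). -/
/-!
Write `K = U diag(λ) U*` and `P = V diag(μ) V*` and put `W = V* U`. For any `f, g`,
`tr (f(K) g(P)) = ∑ᵢ ∑ⱼ f(λᵢ) g(μⱼ) |Wⱼᵢ|²`, and since `K = id(K) · 1(P)`, `P = 1(K) · id(P)` and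
`K log K = (x log x)(K) · 1(P)`, all four traces have this form. The inequality is then the scalar
one `x - y ≤ x log x - x log y`, summed against the nonnegative weights `|Wⱼᵢ|²`.
-/

lemma Real.sub_le_mul_log_sub_mul_log {x y : ℝ} (hx : 0 < x) (hy : 0 < y) :
    x - y ≤ x * Real.log x - x * Real.log y := by
  have h := mul_le_mul_of_nonneg_left (Real.one_sub_inv_le_log_of_pos (div_pos hx hy)) hx.le
  rw [Real.log_div hx.ne' hy.ne', inv_div, mul_sub, mul_one, mul_div_cancel₀ _ hx.ne'] at h
  linarith

namespace Matrix

variable {n 𝕜 : Type*} [RCLike 𝕜] [Fintype n] [DecidableEq n]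

lemma trace_diagonal_mul_conjTranspose_mul_diagonal_mul (W : Matrix n n 𝕜) (d e : n → ℝ) :
    (diagonal (RCLike.ofReal ∘ d) * (Wᴴ * diagonal (RCLike.ofReal ∘ e) * W)).trace =
      ((∑ i, ∑ j, d i * e j * ‖W j i‖ ^ 2 : ℝ) : 𝕜) := by
  push_cast
  refine Finset.sum_congr rfl fun i _ => ?_
  rw [diag_apply, diagonal_mul, mul_apply, Finset.mul_sum]
  refine Finset.sum_congr rfl fun j _ => ?_
  rw [mul_diagonal, conjTranspose_apply, ← RCLike.conj_mul, RCLike.star_def, Function.comp_apply,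
    Function.comp_apply]
  ring

namespace IsHermitian

variable {A B : Matrix n n 𝕜}

lemma cfc_mul_cfc (hA : A.IsHermitian) (f g : ℝ → ℝ) :
    hA.cfc f * hA.cfc g = hA.cfc (f * g) := by
  simp only [IsHermitian.cfc, ← map_mul, diagonal_mul_diagonal]
  congr 2
  ext i
  simp

lemma cfc_id_eq (hA : A.IsHermitian) : hA.cfc id = A := by
  rw [← hA.cfc_eq, cfc_id ℝ A]

lemma cfc_one_eq (hA : A.IsHermitian) : hA.cfc 1 = 1 := by
  rw [← hA.cfc_eq, cfc_one ℝ A]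

lemma trace_cfc_mul_cfc (hA : A.IsHermitian) (hB : B.IsHermitian) (f g : ℝ → ℝ) :
    (hA.cfc f * hB.cfc g).trace =
      ((∑ i, ∑ j, f (hA.eigenvalues i) * g (hB.eigenvalues j) *
        ‖(star (hB.eigenvectorUnitary : Matrix n n 𝕜) * hA.eigenvectorUnitary) j i‖ ^ 2 : ℝ) :
        𝕜) := by
  rw [← trace_diagonal_mul_conjTranspose_mul_diagonal_mul, IsHermitian.cfc, IsHermitian.cfc,
    Unitary.conjStarAlgAut_apply, Unitary.conjStarAlgAut_apply, mul_assoc, mul_assoc,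
    trace_mul_comm]
  simp only [← star_eq_conjTranspose, star_mul, star_star, mul_assoc]
  rfl

end IsHermitian
end Matrix

open scoped ComplexOrder

/-- Klein's inequality: for positive definite Hermitian matrices `K`, `P`,
`tr(K log K − K log P) ≥ tr(K − P)` (the matrix logarithm is defined by the
spectral decomposition, via the Hermitian functional calculus). -/
theorem stmt3 {n : ℕ} (K P : Matrix (Fin n) (Fin n) ℂ)
    (hK : K.PosDef) (hP : P.PosDef) :
    (K - P).trace.re ≤
      (K * hK.1.cfc Real.log - K * hP.1.cfc Real.log).trace.re := by
  have trace_K : K.trace = (hK.1.cfc id * hP.1.cfc 1).trace := by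
    rw [hK.1.cfc_id_eq, hP.1.cfc_one_eq, mul_one]
  have trace_P : P.trace = (hK.1.cfc 1 * hP.1.cfc id).trace := by
    rw [hK.1.cfc_one_eq, hP.1.cfc_id_eq, one_mul]
  have trace_K_log_K :
      (K * hK.1.cfc Real.log).trace = (hK.1.cfc (id * Real.log) * hP.1.cfc 1).trace := by
    rw [hP.1.cfc_one_eq, mul_one, ← hK.1.cfc_mul_cfc, hK.1.cfc_id_eq]
  have trace_K_log_P :
      (K * hP.1.cfc Real.log).trace = (hK.1.cfc id * hP.1.cfc Real.log).trace := by
    rw [hK.1.cfc_id_eq]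
  rw [Matrix.trace_sub, Matrix.trace_sub, trace_K, trace_P, trace_K_log_K, trace_K_log_P]
  simp only [hK.1.trace_cfc_mul_cfc, RCLike.ofReal_eq_complex_ofReal, ← Complex.ofReal_sub,
    Complex.ofReal_re]
  refine sub_nonneg.mp ?_
  simp only [← Finset.sum_sub_distrib]
  refine Finset.sum_nonneg fun i _ => Finset.sum_nonneg fun j _ => ?_
  have klein := Real.sub_le_mul_log_sub_mul_log (hK.eigenvalues_pos i) (hP.eigenvalues_pos j)
  have weight_nonneg := sq_nonneg
    ‖(star (hP.1.eigenvectorUnitary : Matrix (Fin n) (Fin n) ℂ) * hK.1.eigenvectorUnitary) j i‖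
  simp only [id, Pi.mul_apply, Pi.one_apply]
  linear_combination mul_le_mul_of_nonneg_right klein weight_nonneg
end
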